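/- Let q be a prime power, m ≥ n, and let γ_1,…,γ_n ∈ F_{q^m} be linearly independent over F_q. Let 0 ≤ i_1 < i_2 < … < i_k ≤ n−1 be integers with k ≤ n. For m = (m_1,…,m_k) ∈ (F_{q^m})^k define the linearized polynomial L_m(x) = Σ_{j=1}^{k} m_j x^{q^{i_j}} and the code C = {(L_m(γ_1),…,L_m(γ_n)) : m ∈ (F_{q^m})^k} ⊆ (F_{q^m})^n. Then the map m ↦ (L_m(γ_1),…,L_m(γ_n)) is injective, and every nonzero codeword c ∈ C satisfies rk(c) ≥ n − i_k; consequently C is an F_{q^m}-linear code of dimension k over F_{q^m} with minimum rank distance at least n − i_k. -/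

import Mathlib

/-!
The map `L_M(x) = Σ_j M_j x^{q^{i_j}}` is `F_q`-linear because Frobenius is, and for `M ≠ 0` its
kernel consists of roots of a nonzero polynomial of degree at most `q^{i_k}`; an `F_q`-subspace of
the kernel therefore has dimension at most `i_k`. Rank–nullity for `L_M` restricted to the
`n`-dimensional span of the `γ_a` gives `rk(L_M(γ)) ≥ n - i_k > 0`. Hence the `F_{q^m}`-linear
evaluation map has trivial kernel, and the distance bound follows by linearity.
-/

/-- The rank over `Fq` of a vector with entries in `Km`. -/
noncomputable def rankVec (Fq : Type*) [Field Fq] {Km : Type*} [Field Km] [Algebra Fq Km]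
    {ι : Type*} (c : ι → Km) : ℕ :=
  Module.finrank Fq (Submodule.span Fq (Set.range c))

open Polynomial Module

theorem Submodule.finrank_map_add_finrank_inf_ker {K V V₂ : Type*} [DivisionRing K]
    [AddCommGroup V] [Module K V] [AddCommGroup V₂] [Module K V₂]
    (f : V →ₗ[K] V₂) (p : Submodule K V) [FiniteDimensional K p] :
    finrank K (p.map f) + finrank K ↥(p ⊓ LinearMap.ker f) = finrank K p := by
  rw [← LinearMap.range_domRestrict, ← Submodule.map_comap_subtype,
    Submodule.finrank_map_subtype_eq, ← LinearMap.ker_domRestrict,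
    LinearMap.finrank_range_add_finrank_ker]

theorem rankVec_zero (Fq : Type*) [Field Fq] {Km : Type*} [Field Km] [Algebra Fq Km]
    (ι : Type*) : rankVec Fq (0 : ι → Km) = 0 := by
  rw [rankVec, Submodule.span_eq_bot.mpr (by rintro _ ⟨a, rfl⟩; rfl), finrank_bot]

section LinearizedPoly

variable {K ι : Type*} [Semiring K] [Fintype ι]

noncomputable def linearizedPoly (q : ℕ) (e : ι → ℕ) (M : ι → K) : K[X] :=
  ∑ j, C (M j) * X ^ q ^ e j

variable {q : ℕ} {e : ι → ℕ} {M : ι → K}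

theorem coeff_linearizedPoly_pow (hq : 1 < q) (he : Function.Injective e) (j : ι) :
    (linearizedPoly q e M).coeff (q ^ e j) = M j := by
  classical
  have hinj : Function.Injective fun i => q ^ e i := (Nat.pow_right_injective hq).comp he
  simp [linearizedPoly, coeff_X_pow, hinj.eq_iff]

theorem linearizedPoly_ne_zero (hq : 1 < q) (he : Function.Injective e) (hM : M ≠ 0) :
    linearizedPoly q e M ≠ 0 := by
  obtain ⟨j, hj⟩ := Function.ne_iff.mp hM
  intro h
  exact hj (by rw [← coeff_linearizedPoly_pow (M := M) hq he j, h, coeff_zero]; rfl)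

theorem natDegree_linearizedPoly_le (hq : 0 < q) {E : ℕ} (hE : ∀ j, e j ≤ E) :
    (linearizedPoly q e M).natDegree ≤ q ^ E :=
  natDegree_sum_le_of_forall_le _ _ fun j _ =>
    (natDegree_C_mul_le _ _).trans <| (natDegree_X_pow_le _).trans (Nat.pow_le_pow_right hq (hE j))

end LinearizedPoly

section LinearizedMap

variable (Fq : Type*) {K ι : Type*} [Field Fq] [Fintype Fq] [Field K] [Algebra Fq K] [Fintype ι]

noncomputable def linearizedMap (e : ι → ℕ) (M : ι → K) : K →ₗ[Fq] K :=
  ∑ j, M j • (FiniteField.frobeniusAlgHom Fq K).toLinearMap ^ e j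

variable {Fq}

theorem linearizedMap_apply (e : ι → ℕ) (M : ι → K) (x : K) :
    linearizedMap Fq e M x = ∑ j, M j * x ^ Fintype.card Fq ^ e j := by
  simp [linearizedMap, Module.End.pow_apply, FiniteField.coe_frobeniusAlgHom, pow_iterate]

theorem eval_linearizedPoly (e : ι → ℕ) (M : ι → K) (x : K) :
    (linearizedPoly (Fintype.card Fq) e M).eval x = linearizedMap Fq e M x := by
  simp [linearizedPoly, linearizedMap_apply, eval_finsetSum]

variable {e : ι → ℕ} {M : ι → K} {E : ℕ}

theorem card_pow_finrank_le_natDegree {P : K[X]} (hP : P ≠ 0) (W : Submodule Fq K)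
    [FiniteDimensional Fq W] (hW : ∀ x ∈ W, P.IsRoot x) :
    Fintype.card Fq ^ finrank Fq W ≤ P.natDegree := by
  classical
  have hsub : (W : Set K) ⊆ P.roots.toFinset := fun x hx => by
    simpa [mem_roots hP] using hW x hx
  calc Fintype.card Fq ^ finrank Fq W = Nat.card W := by
        rw [Module.natCard_eq_pow_finrank (K := Fq), Nat.card_eq_fintype_card]
    _ ≤ Nat.card (P.roots.toFinset : Set K) := Nat.card_mono (Finset.finite_toSet _) hsub
    _ ≤ P.natDegree := by
        rw [Nat.card_coe_set_eq, Set.ncard_coe_finset]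
        exact (Multiset.toFinset_card_le _).trans (card_roots' P)

theorem finrank_inf_ker_linearizedMap_le (he : Function.Injective e) (hE : ∀ j, e j ≤ E)
    (hM : M ≠ 0) (W : Submodule Fq K) [FiniteDimensional Fq W] :
    finrank Fq ↥(W ⊓ LinearMap.ker (linearizedMap Fq e M)) ≤ E := by
  have hq : 1 < Fintype.card Fq := Fintype.one_lt_card
  refine (Nat.pow_le_pow_iff_right hq).mp <|
    le_trans ?_ (natDegree_linearizedPoly_le (M := M) (by omega) hE)
  refine card_pow_finrank_le_natDegree (linearizedPoly_ne_zero hq he hM) _ fun x hx => ?_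
  rw [IsRoot.def, eval_linearizedPoly]
  exact hx.2

theorem sub_le_rankVec_linearizedMap_comp {κ : Type*} [Fintype κ] {γ : κ → K}
    (hγ : LinearIndependent Fq γ) (he : Function.Injective e) (hE : ∀ j, e j ≤ E)
    (hM : M ≠ 0) : Fintype.card κ - E ≤ rankVec Fq (linearizedMap Fq e M ∘ γ) := by
  have := FiniteDimensional.span_of_finite Fq (Set.finite_range γ)
  have hrank := (Submodule.span Fq (Set.range γ)).finrank_map_add_finrank_inf_ker
    (linearizedMap Fq e M)
  have hker := finrank_inf_ker_linearizedMap_le he hE hM (Submodule.span Fq (Set.range γ))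
  rw [finrank_span_eq_card hγ, Submodule.map_span, ← Set.range_comp] at hrank
  rw [rankVec]
  omega

end LinearizedMap

theorem linearized_evaluation_code_rank_distance
    (q n k : ℕ) (hkn : k ≤ n) (hk : 0 < k)
    (Fq Km : Type*) [Field Fq] [Fintype Fq] [Field Km] [Algebra Fq Km]
    (hcFq : Fintype.card Fq = q)
    (γ : Fin n → Km) (hγ : LinearIndependent Fq γ)
    (e : Fin k → ℕ) (he : StrictMono e) (hemax : ∀ j, e j ≤ n - 1) :
    -- injectivity of the evaluation map
    Function.Injective (fun M : Fin k → Km =>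
      fun a : Fin n => ∑ j : Fin k, M j * (γ a) ^ (q ^ (e j))) ∧
    -- every nonzero codeword has rank at least `n - i_k`
    (∀ M : Fin k → Km, M ≠ 0 →
      n - e ⟨k - 1, by omega⟩ ≤
        rankVec Fq (fun a : Fin n => ∑ j : Fin k, M j * (γ a) ^ (q ^ (e j)))) ∧
    -- the code is `F_{q^m}`-linear of dimension `k` over `F_{q^m}` …
    (∃ W : Submodule Km (Fin n → Km),
        (W : Set (Fin n → Km)) =
          {c | ∃ M : Fin k → Km, c = fun a => ∑ j : Fin k, M j * (γ a) ^ (q ^ (e j))} ∧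
        Module.finrank Km W = k) ∧
    -- … with minimum rank distance at least `n - i_k`
    (∀ M M' : Fin k → Km,
      (fun a : Fin n => ∑ j : Fin k, M j * (γ a) ^ (q ^ (e j))) ≠
        (fun a : Fin n => ∑ j : Fin k, M' j * (γ a) ^ (q ^ (e j))) →
      n - e ⟨k - 1, by omega⟩ ≤
        rankVec Fq (fun a : Fin n =>
          (∑ j : Fin k, M j * (γ a) ^ (q ^ (e j))) -
            ∑ j : Fin k, M' j * (γ a) ^ (q ^ (e j)))) := by
  subst hcFq
  set E := e ⟨k - 1, by omega⟩
  have hE : ∀ j, e j ≤ E := fun j => he.monotone (Fin.mk_le_mk.mpr (by omega))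
  have hEn : E < n := by have := hemax ⟨k - 1, by omega⟩; omega
  let Φ := Matrix.vecMulLinear fun (j : Fin k) (a : Fin n) => γ a ^ Fintype.card Fq ^ e j
  have hrank : ∀ M : Fin k → Km, M ≠ 0 → n - E ≤ rankVec Fq (Φ M) := fun M hM => by
    have hΦ : Φ M = linearizedMap Fq e M ∘ γ :=
      funext fun a => (linearizedMap_apply e M (γ a)).symm
    simpa [hΦ] using sub_le_rankVec_linearizedMap_comp hγ he.injective hE hM
  have hinj : Function.Injective Φ := (injective_iff_map_eq_zero Φ).mpr fun M hM0 => by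
    by_contra hM
    have := hrank M hM
    rw [hM0, rankVec_zero] at this
    omega
  refine ⟨hinj, hrank, ⟨LinearMap.range Φ, ?_, ?_⟩, fun M M' hne => ?_⟩
  · ext c
    simp only [SetLike.mem_coe, LinearMap.mem_range, Set.mem_ofPred_eq, eq_comm]
    rfl
  · rw [LinearMap.finrank_range_of_inj hinj, Module.finrank_fin_fun]
  · have hdiff := hrank (M - M') (sub_ne_zero.mpr fun h => hne (h ▸ rfl))
    rwa [map_sub] at hdiff
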